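/- In the tropical representation of W(A_{N-1}^{(1)}) on τ-variables, the substitution f_n = (τ_{n+1}^1 τ_{n-1}^{-1})/(τ_{n-1}^1 τ_{n+1}^{-1}) intertwines the τ-variable action s_n(τ_n^1) = (v_n^{1/2} τ_{n+1}^1 τ_{n-1}^{-1} + v_n^{-1/2} τ_{n-1}^1 τ_{n+1}^{-1})/τ_n^{-1}, s_n(τ_n^{-1}) = (u_n^{-1/2} τ_{n+1}^1 τ_{n-1}^{-1} + u_n^{1/2} τ_{n-1}^1 τ_{n+1}^{-1})/τ_n^1 with the f-variable action s_n(f_{n-1}) = a_n f_{n-1}(f_n + 1/v_n)/(f_n + u_n), s_n(f_{n+1}) = a_n^{-1} f_{n+1}(f_n + u_n)/(f_n + 1/v_n). -/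
import Mathlib


/-- In type `A_{N-1}^{(1)}` the substitution
`f_n = (τ_{n+1}^1 τ_{n-1}^{-1})/(τ_{n-1}^1 τ_{n+1}^{-1})` intertwines the τ-variable
action of `s_n` with the `f`-variable action
`s_n(f_{n∓1}) = a_n^{±1} f_{n∓1} (f_n + 1/v_n)^{±1}(f_n + u_n)^{∓1}`. -/
theorem stmt_7 {K : Type*} [Field K] (N : ℕ) (hN : 3 ≤ N)
    (tp tm : ZMod N → K) (a u v su sv : K)
    (hsu : su ^ 2 = u) (hsv : sv ^ 2 = v) (ha : su * sv = a)
    (hsu0 : su ≠ 0) (hsv0 : sv ≠ 0)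
    (htp : ∀ m, tp m ≠ 0) (htm : ∀ m, tm m ≠ 0)
    (n : ZMod N)
    (f : ZMod N → K)
    (hf : ∀ m, f m = tp (m + 1) * tm (m - 1) / (tp (m - 1) * tm (m + 1)))
    (hfu : f n + u ≠ 0) (hfv : f n + v⁻¹ ≠ 0)
    (tp' tm' : K)
    (htp' : tp' = (sv * (tp (n + 1) * tm (n - 1)) + sv⁻¹ * (tp (n - 1) * tm (n + 1))) / tm n)
    (htm' : tm' = (su⁻¹ * (tp (n + 1) * tm (n - 1)) + su * (tp (n - 1) * tm (n + 1))) / tp n) :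
    tp' * tm (n - 2) / (tp (n - 2) * tm') = a * f (n - 1) * (f n + v⁻¹) / (f n + u)
    ∧ tp (n + 2) * tm' / (tp' * tm (n + 2)) = a⁻¹ * f (n + 1) * (f n + u) / (f n + v⁻¹) := by
  set A := tp (n + 1) * tm (n - 1) with hA
  set B := tp (n - 1) * tm (n + 1) with hB
  have hA0 : A ≠ 0 := mul_ne_zero (htp _) (htm _)
  have hB0 : B ≠ 0 := mul_ne_zero (htp _) (htm _)
  have hfn : f n = A / B := hf n
  -- numerators in factored form
  have hv : sv * A + sv⁻¹ * B = sv * B * (f n + v⁻¹) := by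
    rw [hfn, ← hsv]
    field_simp
  have hu : su⁻¹ * A + su * B = su⁻¹ * B * (f n + u) := by
    rw [hfn, ← hsu]
    field_simp
  have htp'2 : tp' = sv * B * (f n + v⁻¹) / tm n := by rw [htp', hv]
  have htm'2 : tm' = su⁻¹ * B * (f n + u) / tp n := by rw [htm', hu]
  have htp'0 : tp' ≠ 0 := by
    rw [htp'2]
    exact div_ne_zero (mul_ne_zero (mul_ne_zero hsv0 hB0) hfv) (htm n)
  have htm'0 : tm' ≠ 0 := by
    rw [htm'2]
    exact div_ne_zero (mul_ne_zero (mul_ne_zero (inv_ne_zero hsu0) hB0) hfu) (htp n)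
  have e1 : n - 1 + 1 = n := by ring
  have e2 : n - 1 - 1 = n - 2 := by ring
  have e3 : n + 1 + 1 = n + 2 := by ring
  have e4 : n + 1 - 1 = n := by ring
  have hfm : f (n - 1) = tp n * tm (n - 2) / (tp (n - 2) * tm n) := by
    rw [hf (n - 1), e1, e2]
  have hfp : f (n + 1) = tp (n + 2) * tm n / (tp n * tm (n + 2)) := by
    rw [hf (n + 1), e3, e4]
  have p1 := htp n; have p2 := htp (n - 2); have p3 := htp (n + 2)
  have m1 := htm n; have m2 := htm (n - 2); have m3 := htm (n + 2)
  constructor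
  · rw [div_eq_div_iff (mul_ne_zero (htp _) htm'0) hfu, htp'2, htm'2, hfm, ← ha]
    field_simp [p1, p2, p3, m1, m2, m3]
  · rw [div_eq_div_iff (mul_ne_zero htp'0 (htm _)) hfv, htp'2, htm'2, hfp, ← ha]
    field_simp [p1, p2, p3, m1, m2, m3]
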